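/- arXiv:1611.09263 — 5 statements merged into one kernel-verified Lean document; each statement's English description precedes it below -/
import Mathlib

section
/- Let C and D be small categories and suppose D has an initial object. Then the precomposition functor π* : Psh(C) ⥤ Psh(C × D), given by F ↦ F ∘ πᵒᵖ where π : C × D ⥤ C is the projection, is fully faithful. -/
open CategoryTheory CategoryTheory.Limits

universe u

/-! The projection `π : C × D ⥤ C` has the fully faithful left adjoint `c ↦ (c, ⊥)`, so `π` is a
localization, and so is `πᵒᵖ`; precomposition with a localization functor is fully faithful. -/

namespace CategoryTheory.Prod

variable {C D : Type*} [Category C] [Category D] {d : D}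

def sectLFstAdjunction (hd : IsInitial d) : Prod.sectL C d ⊣ Prod.fst C D :=
  Adjunction.mkOfHomEquiv
    { homEquiv := fun c x =>
        { toFun := fun f => f.1
          invFun := fun g => (g, hd.to x.2)
          left_inv := fun f => Prod.ext rfl (hd.hom_ext _ _)
          right_inv := fun _ => rfl }
      homEquiv_naturality_left_symm := fun _ _ => Prod.ext rfl (hd.hom_ext _ _) }

def fullyFaithfulSectLOfIsInitial (hd : IsInitial d) : (Prod.sectL C d).FullyFaithful where
  preimage f := f.1
  map_preimage f := Prod.ext rfl (hd.hom_ext _ _)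

lemma isLocalization_fst_of_isInitial (hd : IsInitial d) :
    (Prod.fst C D).IsLocalization ((MorphismProperty.isomorphisms C).inverseImage (Prod.fst C D)) :=
  have := (fullyFaithfulSectLOfIsInitial (C := C) hd).full
  have := (fullyFaithfulSectLOfIsInitial (C := C) hd).faithful
  (sectLFstAdjunction hd).isLocalization'

end CategoryTheory.Prod

/-- Let `C` and `D` be small categories and suppose `D` has an initial
object. Then the precomposition functor `π* : Psh(C) ⥤ Psh(C × D)`, given by
`F ↦ F ∘ πᵒᵖ` where `π : C × D ⥤ C` is the projection, is fully faithful. -/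
theorem precomposition_with_projection_fullyFaithful
    (C D : Type u) [SmallCategory C] [SmallCategory D] [HasInitial D] :
    ((Functor.whiskeringLeft (C × D)ᵒᵖ Cᵒᵖ (Type u)).obj (CategoryTheory.Prod.fst C D).op).Full ∧
    ((Functor.whiskeringLeft (C × D)ᵒᵖ Cᵒᵖ (Type u)).obj (CategoryTheory.Prod.fst C D).op).Faithful := by
  have := Prod.isLocalization_fst_of_isInitial (C := C) (initialIsInitial (C := D))
  let W := (MorphismProperty.isomorphisms C).inverseImage (CategoryTheory.Prod.fst C D)
  exact ⟨Localization.full_whiskeringLeft _ W.op _, Localization.faithful_whiskeringLeft _ W.op _⟩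
end

section
/- Let C and D be small categories and suppose D has an initial object. Then π* : Psh(C) ⥤ Psh(C × D) is a cartesian closed functor: it preserves finite products, and for all presheaves A, B on C the canonical exponential comparison morphism π*(B^A) ⟶ (π*B)^(π*A) in Psh(C × D) is an isomorphism. -/
/-!
The projection `π : C × D ⥤ C` has the left adjoint `σ : c ↦ (c, ⊥)`, and `π ∘ σ = 𝟭`. Dualizing
and precomposing turns this into an adjunction `σ* ⊣ π*` whose counit is invertible, so `π*` is a
fully faithful right adjoint. Its left adjoint `σ*`, being a precomposition functor, preserves
products, and by Frobenius reciprocity a fully faithful right adjoint with a product-preserving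
left adjoint is cartesian closed.
-/

open CategoryTheory CategoryTheory.Limits

universe u

namespace CategoryTheory

noncomputable def Prod.sectLInitialAdjFst (C : Type*) [Category C] (D : Type*) [Category D]
    [HasInitial D] : Prod.sectL C (⊥_ D) ⊣ Prod.fst C D :=
  Adjunction.mkOfHomEquiv
    { homEquiv _ _ :=
        { toFun f := f.1
          invFun g := (g, initial.to _)
          left_inv _ := Prod.ext rfl (initial.hom_ext _ _)
          right_inv _ := rfl }
      homEquiv_naturality_left_symm _ _ := Prod.ext rfl (initial.hom_ext _ _) }

instance Prod.isIso_sectLInitialAdjFst_unit (C : Type*) [Category C] (D : Type*) [Category D]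
    [HasInitial D] : IsIso (Prod.sectLInitialAdjFst C D).unit :=
  have (X : C) : IsIso ((Prod.sectLInitialAdjFst C D).unit.app X) := inferInstanceAs (IsIso (𝟙 X))
  NatIso.isIso_of_isIso_app _

namespace Adjunction

variable {C D : Type*} [Category C] [Category D]

instance isIso_op_counit {F : C ⥤ D} {G : D ⥤ C} (adj : G ⊣ F) [IsIso adj.unit] :
    IsIso adj.op.counit :=
  inferInstanceAs (IsIso (NatTrans.op adj.unit))

instance isIso_whiskerLeft_counit {F : C ⥤ D} {G : D ⥤ C} (adj : F ⊣ G) [IsIso adj.counit]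
    (E : Type*) [Category E] : IsIso (adj.whiskerLeft E).counit :=
  have (X : D ⥤ E) : IsIso ((adj.whiskerLeft E).counit.app X) :=
    have (Y : D) : IsIso (((adj.whiskerLeft E).counit.app X).app Y) := by
      simp only [whiskerLeft_counit_app_app]
      infer_instance
    NatIso.isIso_of_isIso_app _
  NatIso.isIso_of_isIso_app _

end Adjunction

end CategoryTheory

/-- Let `C` and `D` be small categories and suppose `D` has an initial
object. Then `π* : Psh(C) ⥤ Psh(C × D)` is a cartesian closed functor: it preserves finite
products, and for all presheaves `A, B` on `C` the canonical exponential comparison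
morphism `π*(B^A) ⟶ (π*B)^(π*A)` is an isomorphism. -/
theorem precomposition_with_projection_cartesianClosedFunctor
    (C D : Type u) [SmallCategory C] [SmallCategory D] [HasInitial D] :
    PreservesFiniteProducts
      ((Functor.whiskeringLeft (C × D)ᵒᵖ Cᵒᵖ (Type u)).obj (CategoryTheory.Prod.fst C D).op) ∧
    ∀ A : Cᵒᵖ ⥤ Type u,
      IsIso (expComparison
        ((Functor.whiskeringLeft (C × D)ᵒᵖ Cᵒᵖ (Type u)).obj (CategoryTheory.Prod.fst C D).op) A).natTrans := by
  let adj := (Prod.sectLInitialAdjFst C D).op.whiskerLeft (Type u)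
  have := adj.fullyFaithfulROfIsIsoCounit.full
  have := adj.fullyFaithfulROfIsIsoCounit.faithful
  exact ⟨inferInstance,
    (cartesianClosedFunctorOfLeftAdjointPreservesBinaryProducts _ adj).comparison_iso⟩
end

section
/- Let D and C be small categories with C having binary products, let e be an object of C, and let X be a presheaf on D × C. Then the exponential presheaf X^(π*(y e)) in Psh(D × C) satisfies X^(π*(y e))(c, d) ≅ X(c, d × e) for all objects c of D and d of C, naturally in (c, d). -/
/-!
By the Yoneda lemma and the exponential adjunction,
`X^P(x) ≅ Hom(y x, X^P) ≅ Hom(P × y x, X)`. For `P = π*(y e)` the product `P × y(c, d)` is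
representable, namely by `(c, d ⨯ e)`, so `X^P(c, d) ≅ Hom(y(c, d ⨯ e), X) ≅ X(c, d ⨯ e)`.
Every step is natural in `(c, d)`, and only uses that `P × -` extends the endofunctor
`(c, d) ↦ (c, d ⨯ e)` along the Yoneda embedding.
-/

open CategoryTheory CategoryTheory.Limits MonoidalCategory

universe u

noncomputable def CategoryTheory.Adjunction.rightAdjointObjIsoPrecomp {E : Type u} [SmallCategory E]
    {L G : (Eᵒᵖ ⥤ Type u) ⥤ (Eᵒᵖ ⥤ Type u)} (adj : L ⊣ G) {S : E ⥤ E}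
    (h : S ⋙ yoneda ≅ yoneda ⋙ L) (X : Eᵒᵖ ⥤ Type u) : G.obj X ≅ S.op ⋙ X :=
  (curriedYonedaLemma'.app (G.obj X)).symm ≪≫
    Functor.isoWhiskerLeft yoneda.op (adj.compYonedaIso.app X) ≪≫
    Functor.isoWhiskerRight (NatIso.op h) (yoneda.obj X) ≪≫
    Functor.isoWhiskerLeft S.op (curriedYonedaLemma'.app X)

section

variable {D C : Type u} [SmallCategory D] [SmallCategory C] [HasBinaryProducts C] (e : C)

noncomputable def homProdRightEquiv (x y : D × C) :
    (y ⟶ (x.1, x.2 ⨯ e)) ≃ (y.2 ⟶ e) × (y ⟶ x) where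
  toFun f := (f.2 ≫ prod.snd, (f.1, f.2 ≫ prod.fst))
  invFun p := (p.2.1, prod.lift p.2.2 p.1)
  left_inv f := by ext <;> simp [prod.lift_fst, prod.lift_snd]
  right_inv p := by ext <;> simp [prod.lift_fst, prod.lift_snd]

noncomputable def prodFlipCompYonedaIso :
    (𝟭 D).prod (prod.functor.flip.obj e) ⋙ yoneda ≅
      yoneda ⋙ tensorLeft (((Functor.whiskeringLeft (D × C)ᵒᵖ Cᵒᵖ (Type u)).obj
          (CategoryTheory.Prod.snd D C).op).obj (yoneda.obj e)) :=
  NatIso.ofComponents (fun x => NatIso.ofComponents (fun y => (homProdRightEquiv e x y.unop).toIso)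
    (fun _ => by ext; exact Prod.ext (Category.assoc _ _ _) (Prod.ext rfl (Category.assoc _ _ _))))
    (fun {x _} f => by
      -- stated for morphisms of `C`: `g.2` below has this type only up to unfolding `yoneda`
      have snd_eq {w : C} (g : w ⟶ x.2 ⨯ e) :
          (g ≫ prod.map f.2 (𝟙 e)) ≫ prod.snd = g ≫ prod.snd := by
        simp
      have fst_eq {w : C} (g : w ⟶ x.2 ⨯ e) :
          (g ≫ prod.map f.2 (𝟙 e)) ≫ prod.fst = (g ≫ prod.fst) ≫ f.2 := by
        simp
      ext _ g
      exact Prod.ext (snd_eq g.2) (Prod.ext rfl (fst_eq g.2)))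

end

/-- Let `D` and `C` be small categories with `C` having binary products,
let `e` be an object of `C`, and let `X` be a presheaf on `D × C`. Then the exponential
presheaf `X^(π*(y e))` in `Psh(D × C)` satisfies `X^(π*(y e))(c, d) ≅ X(c, d × e)` for all
objects `c` of `D` and `d` of `C`, naturally in `(c, d)`; i.e. the exponential presheaf is
naturally isomorphic to the presheaf `(c, d) ↦ X(c, d × e)`. -/
theorem exponential_by_precomposed_yoneda
    (D C : Type u) [SmallCategory D] [SmallCategory C] [HasBinaryProducts C]
    (e : C) (X : (D × C)ᵒᵖ ⥤ Type u) :
    Nonempty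
      ((ihom (((Functor.whiskeringLeft (D × C)ᵒᵖ Cᵒᵖ (Type u)).obj
          (CategoryTheory.Prod.snd D C).op).obj (yoneda.obj e))).obj X ≅
        ((𝟭 D).prod (Limits.prod.functor.flip.obj e)).op ⋙ X) :=
  ⟨(ihom.adjunction _).rightAdjointObjIsoPrecomp (prodFlipCompYonedaIso e) X⟩
end

section
/- Let C be a small category and let ω denote the poset (ℕ, ≤) regarded as a category. Let X be a presheaf on C × ω. Suppose given, for every object I of C, an element a_{I,0} ∈ X(I,0) and, for every n, a function a_{I,n+1} : X(I,n) → X(I,n+1), such that: (i) the families a_{I,n} are natural in I, i.e. for every morphism f : J → I in C, X(f, id)(a_{I,0}) = a_{J,0} and X(f, id) ∘ a_{I,n+1} = a_{J,n+1} ∘ X(f, id); (ii) for all I and all x ∈ X(I,0), the restriction of a_{I,1}(x) along 0 ≤ 1 equals a_{I,0}; and (iii) for all I and n, restricting along n+1 ≤ n+2 satisfies X(id, n+1 ≤ n+2) ∘ a_{I,n+2} = a_{I,n+1} ∘ X(id, n ≤ n+1). Then there exists a unique global element β of X (i.e. a family β_{I,n} ∈ X(I,n) natural in I and compatible with the ω-restrictions)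 such that β_{I,0} = a_{I,0} and β_{I,n+1} = a_{I,n+1}(β_{I,n}) for all I and n. -/
open CategoryTheory Opposite

universe u

/-!
The fixed point is forced level by level: `β_{I,0} = a_{I,0}` and `β_{I,n+1} = a_{I,n+1}(β_{I,n})`,
which gives uniqueness. For existence one checks, by induction on `n`, that the recursively
defined family is natural in `I` (condition (i)) and compatible with the one-step restrictions
`n ≤ n + 1` (conditions (ii) and (iii)). Every restriction along `(f, m ≤ n)` factors as a
composite of one-step restrictions followed by `(f, id)`, so this already makes it a global element.
-/

theorem map_homOfLE_eq_of_map_succ {F : ℕᵒᵖ ⥤ Type*} (x : ∀ n, F.obj (op n))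
    (hx : ∀ n, F.map (homOfLE (Nat.le_succ n)).op (x (n + 1)) = x n) {m n : ℕ} (h : m ≤ n) :
    F.map (homOfLE h).op (x n) = x m := by
  induction n, h using Nat.le_induction with
  | base => exact F.map_id_apply (op m) (x m)
  | succ n hmn ih =>
    rw [← ih, ← hx n, ← types_comp_apply (F.map _) (F.map _), ← F.map_comp]
    rfl

section

variable {C : Type*} [Category C] {X : (C × ℕ)ᵒᵖ ⥤ Type*}

theorem map_eq_of_map_fst_of_map_succ (β : ∀ (I : C) (n : ℕ), X.obj (op (I, n)))
    (hfst : ∀ {J I : C} (f : J ⟶ I) (n : ℕ),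
      X.map (Quiver.Hom.op ((f, 𝟙 n) : ((J, n) : C × ℕ) ⟶ (I, n))) (β I n) = β J n)
    (hsucc : ∀ (I : C) (n : ℕ),
      X.map (Quiver.Hom.op ((𝟙 I, homOfLE (Nat.le_succ n)) : ((I, n) : C × ℕ) ⟶ (I, n + 1)))
        (β I (n + 1)) = β I n)
    {J I : C} (f : J ⟶ I) {m n : ℕ} (h : m ≤ n) :
    X.map (Quiver.Hom.op ((f, homOfLE h) : ((J, m) : C × ℕ) ⟶ (I, n))) (β I n) = β J m := by
  have hfactor : ((f, homOfLE h) : ((J, m) : C × ℕ) ⟶ (I, n)) =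
      (((𝟙 J, homOfLE h) : ((J, m) : C × ℕ) ⟶ (J, n)) ≫
        ((f, 𝟙 n) : ((J, n) : C × ℕ) ⟶ (I, n)) : ((J, m) : C × ℕ) ⟶ (I, n)) :=
    Prod.ext (by simp) rfl
  rw [hfactor, op_comp, X.map_comp, types_comp_apply, hfst]
  exact map_homOfLE_eq_of_map_succ (F := (Prod.sectR J ℕ).op ⋙ X) (β J) (hsucc J) h

variable (a0 : ∀ I : C, X.obj (op (I, 0)))
  (aS : ∀ (I : C) (n : ℕ), X.obj (op (I, n)) → X.obj (op (I, n + 1)))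

def laterFix (I : C) : ∀ n : ℕ, X.obj (op (I, n))
  | 0 => a0 I
  | n + 1 => aS I n (laterFix I n)

theorem laterFix_map_fst
    (hnat0 : ∀ {J I : C} (f : J ⟶ I),
      X.map (Quiver.Hom.op ((f, 𝟙 0) : ((J, 0) : C × ℕ) ⟶ (I, 0))) (a0 I) = a0 J)
    (hnatS : ∀ {J I : C} (f : J ⟶ I) (n : ℕ) (x : X.obj (op (I, n))),
      X.map (Quiver.Hom.op ((f, 𝟙 (n + 1)) : ((J, n + 1) : C × ℕ) ⟶ (I, n + 1))) (aS I n x) =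
        aS J n (X.map (Quiver.Hom.op ((f, 𝟙 n) : ((J, n) : C × ℕ) ⟶ (I, n))) x))
    {J I : C} (f : J ⟶ I) (n : ℕ) :
    X.map (Quiver.Hom.op ((f, 𝟙 n) : ((J, n) : C × ℕ) ⟶ (I, n))) (laterFix a0 aS I n) =
      laterFix a0 aS J n := by
  induction n with
  | zero => exact hnat0 f
  | succ n ih => exact (hnatS f n _).trans (congrArg (aS J n) ih)

theorem laterFix_map_succ
    (h01 : ∀ (I : C) (x : X.obj (op (I, 0))),
      X.map (Quiver.Hom.op ((𝟙 I, homOfLE (Nat.le_succ 0)) : ((I, 0) : C × ℕ) ⟶ (I, 1)))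
        (aS I 0 x) = a0 I)
    (hSS : ∀ (I : C) (n : ℕ) (x : X.obj (op (I, n + 1))),
      X.map (Quiver.Hom.op ((𝟙 I, homOfLE (Nat.le_succ (n + 1))) :
          ((I, n + 1) : C × ℕ) ⟶ (I, n + 2))) (aS I (n + 1) x) =
        aS I n (X.map (Quiver.Hom.op ((𝟙 I, homOfLE (Nat.le_succ n)) :
          ((I, n) : C × ℕ) ⟶ (I, n + 1))) x))
    (I : C) (n : ℕ) :
    X.map (Quiver.Hom.op ((𝟙 I, homOfLE (Nat.le_succ n)) : ((I, n) : C × ℕ) ⟶ (I, n + 1)))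
      (laterFix a0 aS I (n + 1)) = laterFix a0 aS I n := by
  induction n with
  | zero => exact h01 I _
  | succ n ih => exact (hSS I n _).trans (congrArg (aS I n) ih)

theorem eq_laterFix (γ : ∀ (I : C) (n : ℕ), X.obj (op (I, n))) (hγ0 : ∀ I, γ I 0 = a0 I)
    (hγS : ∀ I n, γ I (n + 1) = aS I n (γ I n)) : γ = laterFix a0 aS := by
  funext I n
  induction n with
  | zero => exact hγ0 I
  | succ n ih => exact (hγS I n).trans (congrArg (aS I n) ih)

end

/-- Let `C` be a small category and `ω = (ℕ, ≤)`. Let `X` be a presheaf on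
`C × ω`. Given a family `a_{I,0} ∈ X(I,0)` and functions `a_{I,n+1} : X(I,n) → X(I,n+1)`,
natural in `I` and compatible with the `ω`-restrictions as in (i)–(iii), there exists a
unique global element `β` of `X` such that `β_{I,0} = a_{I,0}` and
`β_{I,n+1} = a_{I,n+1}(β_{I,n})` for all `I` and `n`. -/
theorem guarded_fixed_point_of_later_algebra
    (C : Type u) [SmallCategory C] (X : (C × ℕ)ᵒᵖ ⥤ Type u)
    (a0 : ∀ I : C, X.obj (op (I, 0)))
    (aS : ∀ (I : C) (n : ℕ), X.obj (op (I, n)) → X.obj (op (I, n + 1)))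
    -- (i) naturality in `I`:
    (hnat0 : ∀ {J I : C} (f : J ⟶ I),
      X.map (Quiver.Hom.op ((f, 𝟙 (0 : ℕ)) : ((J, 0) : C × ℕ) ⟶ ((I, 0) : C × ℕ)))
        (a0 I) = a0 J)
    (hnatS : ∀ {J I : C} (f : J ⟶ I) (n : ℕ) (x : X.obj (op (I, n))),
      X.map (Quiver.Hom.op ((f, 𝟙 (n + 1 : ℕ)) :
          ((J, n + 1) : C × ℕ) ⟶ ((I, n + 1) : C × ℕ))) (aS I n x) =
        aS J n (X.map (Quiver.Hom.op ((f, 𝟙 (n : ℕ)) :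
          ((J, n) : C × ℕ) ⟶ ((I, n) : C × ℕ))) x))
    -- (ii) restricting `a_{I,1}(x)` along `0 ≤ 1` gives `a_{I,0}`:
    (h01 : ∀ (I : C) (x : X.obj (op (I, 0))),
      X.map (Quiver.Hom.op ((𝟙 I, homOfLE (Nat.le_succ 0)) :
          ((I, 0) : C × ℕ) ⟶ ((I, 1) : C × ℕ))) (aS I 0 x) = a0 I)
    -- (iii) compatibility with restriction along `n+1 ≤ n+2`:
    (hSS : ∀ (I : C) (n : ℕ) (x : X.obj (op (I, n + 1))),
      X.map (Quiver.Hom.op ((𝟙 I, homOfLE (Nat.le_succ (n + 1))) :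
          ((I, n + 1) : C × ℕ) ⟶ ((I, n + 2) : C × ℕ))) (aS I (n + 1) x) =
        aS I n (X.map (Quiver.Hom.op ((𝟙 I, homOfLE (Nat.le_succ n)) :
          ((I, n) : C × ℕ) ⟶ ((I, n + 1) : C × ℕ))) x)) :
    ∃! β : ∀ (I : C) (n : ℕ), X.obj (op (I, n)),
      (∀ {J I : C} (f : J ⟶ I) {m n : ℕ} (h : m ≤ n),
        X.map (Quiver.Hom.op ((f, homOfLE h) :
          ((J, m) : C × ℕ) ⟶ ((I, n) : C × ℕ))) (β I n) = β J m) ∧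
      (∀ I : C, β I 0 = a0 I) ∧
      (∀ (I : C) (n : ℕ), β I (n + 1) = aS I n (β I n)) := by
  refine ⟨laterFix a0 aS, ⟨?_, fun _ => rfl, fun _ _ => rfl⟩, ?_⟩
  · exact map_eq_of_map_fst_of_map_succ (laterFix a0 aS)
      (laterFix_map_fst a0 aS hnat0 hnatS) (laterFix_map_succ a0 aS h01 hSS)
  rintro γ ⟨-, hγ0, hγS⟩
  exact eq_laterFix a0 aS γ hγ0 hγS
end

section
/- Let C be a small category, Γ a presheaf on C, and Γ' a subpresheaf of Γ such that for each object c of C, membership of an element of Γ(c) in Γ'(c) is decidable. Regard the category of elements ∫Γ' as a full subcategory of ∫Γ via the inclusion. Let T be a presheaf on ∫Γ and A a presheaf on ∫Γ', and suppose given a natural isomorphism between A and the restriction of T along the inclusion ∫Γ' ⥤ ∫Γ. Then there exists a presheaf T' on ∫Γ such that (1) the restriction of T' to ∫Γ' is equal (as a functor, on the nose) to A, and (2) there is a natural isomorphism T ≅ T' whose restriction to ∫Γ' is the given isomorphism between the restriction of T and A. -/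
/-!
Put `T' x := A x` for `x ∈ ∫Γ'` and `T' x := T x` otherwise. The given isomorphism provides
`T x ≅ T' x` for every `x`, and transporting the action of `T` on morphisms along these
(`Functor.copyObj`) makes `T'` a functor isomorphic to `T`. On `∫Γ'` the transported action is
that of `A`, by naturality of the given isomorphism, so the restriction of `T'` is `A` on the nose.
-/

open CategoryTheory

universe u

namespace CategoryTheory.Functor

variable {D E K : Type*} [Category D] [Category E] [Category K]
  {J : E ⥤ D} {F : D ⥤ K} {A : E ⥤ K} (iso : A ≅ J ⋙ F)
  {obj : D → K} (ε : ∀ d, F.obj d ≅ obj d) (hobj : ∀ e, obj (J.obj e) = A.obj e)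

lemma whiskerLeft_copyObj_eq (hε : ∀ e, ε (J.obj e) = iso.symm.app e ≪≫ eqToIso (hobj e).symm) :
    J ⋙ F.copyObj obj ε = A :=
  Functor.ext_of_iso (isoWhiskerLeft J (F.isoCopyObj obj ε).symm ≪≫ iso.symm) hobj fun e => by
    change (ε (J.obj e)).inv ≫ iso.inv.app e = eqToHom (hobj e)
    simp [hε]

lemma whiskerLeft_isoCopyObj_hom_comp_eqToHom
    (hε : ∀ e, ε (J.obj e) = iso.symm.app e ≪≫ eqToIso (hobj e).symm) :
    whiskerLeft J (F.isoCopyObj obj ε).hom ≫ eqToHom (whiskerLeft_copyObj_eq iso ε hobj hε) =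
      iso.inv := by
  ext e
  rw [NatTrans.comp_app, eqToHom_app]
  change (ε (J.obj e)).hom ≫ eqToHom (hobj e) = _
  simp [hε]

theorem exists_iso_whiskerLeft_hom_comp_eqToHom_eq
    (hε : ∀ e, ε (J.obj e) = iso.symm.app e ≪≫ eqToIso (hobj e).symm) :
    ∃ (F' : D ⥤ K) (h : J ⋙ F' = A) (e : F ≅ F'), whiskerLeft J e.hom ≫ eqToHom h = iso.inv :=
  ⟨_, _, _, whiskerLeft_isoCopyObj_hom_comp_eqToHom iso ε hobj hε⟩

end CategoryTheory.Functor

namespace CategoryTheory.Subfunctor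

variable {C : Type*} [Category C] {Γ : Cᵒᵖ ⥤ Type*} {Γ' : Subfunctor Γ}
  [∀ c x, Decidable (x ∈ Γ'.obj c)] {K : Type*} [Category K]
  {T : Γ.Elementsᵒᵖ ⥤ K} {A : Γ'.toFunctor.Elementsᵒᵖ ⥤ K}

variable (Γ' T A) in
def elementsExtendObj (x : Γ.Elementsᵒᵖ) : K :=
  if h : x.unop.2 ∈ Γ'.obj x.unop.1 then A.obj (.op ⟨x.unop.1, x.unop.2, h⟩) else T.obj x

lemma elementsExtendObj_of_mem {x : Γ.Elementsᵒᵖ} (h : x.unop.2 ∈ Γ'.obj x.unop.1) :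
    Γ'.elementsExtendObj T A x = A.obj (.op ⟨x.unop.1, x.unop.2, h⟩) :=
  dif_pos h

lemma elementsExtendObj_of_notMem {x : Γ.Elementsᵒᵖ} (h : x.unop.2 ∉ Γ'.obj x.unop.1) :
    Γ'.elementsExtendObj T A x = T.obj x :=
  dif_neg h

lemma elementsExtendObj_map_obj (y : Γ'.toFunctor.Elementsᵒᵖ) :
    Γ'.elementsExtendObj T A ((CategoryOfElements.map Γ'.ι).op.obj y) = A.obj y :=
  elementsExtendObj_of_mem y.unop.2.2

variable (iso : A ≅ (CategoryOfElements.map Γ'.ι).op ⋙ T)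

def elementsExtendObjIso (x : Γ.Elementsᵒᵖ) : T.obj x ≅ Γ'.elementsExtendObj T A x :=
  if h : x.unop.2 ∈ Γ'.obj x.unop.1 then
    (iso.app (.op ⟨x.unop.1, x.unop.2, h⟩)).symm ≪≫ eqToIso (elementsExtendObj_of_mem h).symm
  else eqToIso (elementsExtendObj_of_notMem h).symm

lemma elementsExtendObjIso_map_obj (y : Γ'.toFunctor.Elementsᵒᵖ) :
    elementsExtendObjIso iso ((CategoryOfElements.map Γ'.ι).op.obj y) =
      iso.symm.app y ≪≫ eqToIso (elementsExtendObj_map_obj y).symm :=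
  dif_pos y.unop.2.2

end CategoryTheory.Subfunctor

open CategoryTheory.Subfunctor in
/-- **Strictification.** Let `C` be a small category, `Γ` a presheaf on `C`,
and `Γ'` a subpresheaf of `Γ` with decidable membership. Regard the category of elements
`∫Γ'` as a full subcategory of `∫Γ` via the inclusion functor induced by `Γ'.ι`. Let `T` be
a presheaf on `∫Γ` and `A` a presheaf on `∫Γ'`, together with a natural isomorphism between
`A` and the restriction of `T` along the inclusion. Then there exists a presheaf `T'` on
`∫Γ` whose restriction to `∫Γ'` is equal (on the nose) to `A`, together with a natural
isomorphism `T ≅ T'` whose restriction to `∫Γ'` is the given isomorphism. -/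
theorem strictification_of_presheaf_along_subpresheaf
    (C : Type u) [SmallCategory C] (Γ : Cᵒᵖ ⥤ Type u) (Γ' : Subfunctor Γ)
    (hdec : ∀ (c : Cᵒᵖ) (x : Γ.obj c), Decidable (x ∈ Γ'.obj c))
    (T : (Γ.Elements)ᵒᵖ ⥤ Type u)
    (A : (Γ'.toFunctor.Elements)ᵒᵖ ⥤ Type u)
    (iso : A ≅ (CategoryOfElements.map Γ'.ι).op ⋙ T) :
    ∃ (T' : (Γ.Elements)ᵒᵖ ⥤ Type u)
      (h : (CategoryOfElements.map Γ'.ι).op ⋙ T' = A)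
      (e : T ≅ T'),
        Functor.whiskerLeft (CategoryOfElements.map Γ'.ι).op e.hom ≫ eqToHom h = iso.inv :=
  Functor.exists_iso_whiskerLeft_hom_comp_eqToHom_eq iso (elementsExtendObjIso iso)
    elementsExtendObj_map_obj (elementsExtendObjIso_map_obj iso)
end
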